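/- arXiv:2109.00649 — 5 statements merged into one kernel-verified Lean document; each statement's English description precedes it below -/
import Mathlib

section
/- Let X and Y be real-valued random variables and n ∈ ℕ with E[X²] < ∞, E[Y^{2n}] < ∞, and |supp(Y)| > n. Let M := M_{Y,n} be the Hankel moment matrix and v := (E[X·Y^j])_{0≤j≤n} ∈ ℝ^{n+1}. Then M is invertible, the vector c* := M⁻¹ v minimizes c ↦ E[(X − Σ_{j=0}^n c_j Y^j)²] over ℝ^{n+1}, and the minimum value satisfies pmmse_n(X|Y) = E[X²] − vᵀ M⁻¹ v. -/
open MeasureTheory ProbabilityTheory Matrix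

/-- The `n`-th polynomial minimum mean-square error of estimating `X` from `Y`. -/
noncomputable def pmmse {Ω : Type*} [MeasurableSpace Ω] (P : Measure Ω)
    (X Y : Ω → ℝ) (n : ℕ) : ℝ :=
  ⨅ c : Fin (n + 1) → ℝ, ∫ ω, (X ω - ∑ j : Fin (n + 1), c j * Y ω ^ (j : ℕ)) ^ 2 ∂P

/-- The Hankel moment matrix `M_{Y,n} = (E[Y^{i+j}])_{0 ≤ i,j ≤ n}`. -/
noncomputable def hankelMoment {Ω : Type*} [MeasurableSpace Ω] (P : Measure Ω)
    (Y : Ω → ℝ) (n : ℕ) : Matrix (Fin (n + 1)) (Fin (n + 1)) ℝ :=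
  Matrix.of fun i j => ∫ ω, Y ω ^ ((i : ℕ) + (j : ℕ)) ∂P

/-- The vector `v = (E[X·Y^j])_{0 ≤ j ≤ n}`. -/
noncomputable def momVec {Ω : Type*} [MeasurableSpace Ω] (P : Measure Ω)
    (X Y : Ω → ℝ) (n : ℕ) : Fin (n + 1) → ℝ :=
  fun j => ∫ ω, X ω * Y ω ^ (j : ℕ) ∂P

/-! Expanding the square, `E[(X - ∑ cⱼ Yʲ)²] = E[X²] - 2 cᵀv + cᵀMc` is a quadratic in `c`.
The form `M` is positive definite: `cᵀMc = E[(∑ cⱼ Yʲ)²]` vanishes only if `Y` is almost surely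
a root of the nonzero polynomial `∑ cⱼ tʲ`, which has at most `n` roots. Completing the square,
the objective is `E[X²] - vᵀM⁻¹v + (c - M⁻¹v)ᵀ M (c - M⁻¹v)`. -/

theorem Matrix.complete_square_dotProduct_mulVec {ι R : Type*} [Fintype ι] [DecidableEq ι]
    [CommRing R] {M : Matrix ι ι R} (hMt : Mᵀ = M) (hM : IsUnit M) (a : R) (v c : ι → R) :
    a - 2 * (c ⬝ᵥ v) + c ⬝ᵥ M *ᵥ c =
      a - v ⬝ᵥ M⁻¹ *ᵥ v + (c - M⁻¹ *ᵥ v) ⬝ᵥ M *ᵥ (c - M⁻¹ *ᵥ v) := by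
  set c₀ := M⁻¹ *ᵥ v
  have hMc₀ : M *ᵥ c₀ = v := by
    rw [mulVec_mulVec, mul_nonsing_inv _ ((isUnit_iff_isUnit_det M).mp hM), one_mulVec]
  have hc₀M : c₀ ᵥ* M = v := by rw [← hMt, vecMul_transpose, hMc₀]
  rw [mulVec_sub, hMc₀, sub_dotProduct, dotProduct_sub, dotProduct_sub, dotProduct_mulVec c₀,
    hc₀M, dotProduct_comm v c₀, dotProduct_comm v c]
  ring

open Polynomial in
theorem exists_finset_card_le_of_sum_mul_pow_eq_zero {R : Type*} [CommRing R]
    [IsDomain R] {n : ℕ} {c : Fin (n + 1) → R} (hc : c ≠ 0) :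
    ∃ S : Finset R, S.card ≤ n ∧ ∀ y, ∑ j : Fin (n + 1), c j * y ^ (j : ℕ) = 0 → y ∈ S := by
  classical
  set p : R[X] := ∑ j : Fin (n + 1), C (c j) * X ^ (j : ℕ)
  have hcoeff (j : Fin (n + 1)) : p.coeff j = c j := by
    simp [p, finsetSum_coeff, Fin.val_inj]
  have hp : p ≠ 0 := by
    obtain ⟨j, hj⟩ := Function.ne_iff.mp hc
    exact fun h => hj (by rw [← hcoeff j, h, coeff_zero]; rfl)
  have hdeg : p.natDegree ≤ n :=
    natDegree_sum_le_of_forall_le _ _ fun j _ =>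
      (natDegree_C_mul_X_pow_le _ _).trans (Nat.le_of_lt_succ j.isLt)
  refine ⟨p.roots.toFinset, (Multiset.toFinset_card_le _).trans ((card_roots' p).trans hdeg),
    fun y hy => ?_⟩
  rw [Multiset.mem_toFinset, mem_roots hp, IsRoot, ← hy]
  simp [p, eval_finsetSum]

section Moments

variable {Ω : Type*} [MeasurableSpace Ω] {P : Measure Ω} {X Y : Ω → ℝ} {n : ℕ}

theorem integral_sub_sq {f g : Ω → ℝ} (hf : MemLp f 2 P) (hg : MemLp g 2 P) :
    ∫ ω, (f ω - g ω) ^ 2 ∂P = ∫ ω, f ω ^ 2 ∂P - 2 * ∫ ω, f ω * g ω ∂P + ∫ ω, g ω ^ 2 ∂P := by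
  have hfg : Integrable (fun ω => 2 * (f ω * g ω)) P := (hf.integrable_mul hg).const_mul 2
  simp_rw [sub_sq, mul_assoc]
  rw [integral_add ?_ hg.integrable_sq, integral_sub hf.integrable_sq hfg, integral_const_mul]
  exact hf.integrable_sq.sub hfg

theorem memLp_two_pow_of_integrable_pow_two_mul [IsFiniteMeasure P]
    (hY : AEStronglyMeasurable Y P) (h : Integrable (fun ω => Y ω ^ (2 * n)) P) {j : ℕ}
    (hj : j ≤ n) : MemLp (fun ω => Y ω ^ j) 2 P := by
  have h' : Integrable (fun ω => ‖Y ω‖ ^ (2 * n)) P := by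
    simpa [(even_two_mul n).pow_abs] using h
  refine (memLp_two_iff_integrable_sq (hY.pow j)).2 ?_
  simpa [← pow_mul, mul_comm j, (even_two_mul j).pow_abs] using
    integrable_norm_pow_of_le hY (by omega : 2 * j ≤ 2 * n) h'

theorem hankelMoment_transpose (P : Measure Ω) (Y : Ω → ℝ) (n : ℕ) :
    (hankelMoment P Y n)ᵀ = hankelMoment P Y n := by
  ext i j
  simp [hankelMoment, add_comm]

theorem memLp_sum_mul_pow
    (hYpow : ∀ j : Fin (n + 1), MemLp (fun ω => Y ω ^ (j : ℕ)) 2 P)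
    (c : Fin (n + 1) → ℝ) :
    MemLp (fun ω => ∑ j : Fin (n + 1), c j * Y ω ^ (j : ℕ)) 2 P :=
  memLp_finsetSum _ fun j _ => (hYpow j).const_mul (c j)

theorem integral_sum_mul_pow_sq
    (hYpow : ∀ j : Fin (n + 1), MemLp (fun ω => Y ω ^ (j : ℕ)) 2 P)
    (c : Fin (n + 1) → ℝ) :
    ∫ ω, (∑ j : Fin (n + 1), c j * Y ω ^ (j : ℕ)) ^ 2 ∂P = c ⬝ᵥ hankelMoment P Y n *ᵥ c := by
  have hint (i j : Fin (n + 1)) :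
      Integrable (fun ω => c i * c j * (Y ω ^ (i : ℕ) * Y ω ^ (j : ℕ))) P :=
    ((hYpow i).integrable_mul (hYpow j)).const_mul _
  simp_rw [sq, Finset.sum_mul_sum, mul_mul_mul_comm]
  rw [integral_finsetSum _ fun i _ => integrable_finsetSum _ fun j _ => hint i j]
  simp_rw [integral_finsetSum _ fun j _ => hint _ j, integral_const_mul, ← pow_add]
  simp only [dotProduct, mulVec, hankelMoment, of_apply, Finset.mul_sum, mul_assoc,
    mul_comm (c _) (∫ _, _ ∂P)]

theorem integral_mul_sum_mul_pow
    (hYpow : ∀ j : Fin (n + 1), MemLp (fun ω => Y ω ^ (j : ℕ)) 2 P)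
    (hX : MemLp X 2 P) (c : Fin (n + 1) → ℝ) :
    ∫ ω, X ω * ∑ j : Fin (n + 1), c j * Y ω ^ (j : ℕ) ∂P = c ⬝ᵥ momVec P X Y n := by
  have hint (j : Fin (n + 1)) : Integrable (fun ω => c j * (X ω * Y ω ^ (j : ℕ))) P :=
    (hX.integrable_mul (hYpow j)).const_mul _
  simp_rw [Finset.mul_sum, mul_left_comm (X _)]
  rw [integral_finsetSum _ fun j _ => hint j]
  simp only [integral_const_mul, dotProduct, momVec]

theorem integral_sq_sub_sum_mul_pow
    (hYpow : ∀ j : Fin (n + 1), MemLp (fun ω => Y ω ^ (j : ℕ)) 2 P)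
    (hX : MemLp X 2 P) (c : Fin (n + 1) → ℝ) :
    ∫ ω, (X ω - ∑ j : Fin (n + 1), c j * Y ω ^ (j : ℕ)) ^ 2 ∂P =
      ∫ ω, X ω ^ 2 ∂P - 2 * (c ⬝ᵥ momVec P X Y n) + c ⬝ᵥ hankelMoment P Y n *ᵥ c := by
  rw [integral_sub_sq hX (memLp_sum_mul_pow hYpow c), integral_mul_sum_mul_pow hYpow hX,
    integral_sum_mul_pow_sq hYpow]

theorem hankelMoment_posDef [IsProbabilityMeasure P]
    (hYpow : ∀ j : Fin (n + 1), MemLp (fun ω => Y ω ^ (j : ℕ)) 2 P)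
    (hsupp : ∀ S : Finset ℝ, S.card ≤ n → P (Y ⁻¹' (S : Set ℝ)) ≠ 1) :
    (hankelMoment P Y n).PosDef := by
  have hM : (hankelMoment P Y n).IsHermitian := by
    rw [IsHermitian, conjTranspose_eq_transpose_of_trivial, hankelMoment_transpose]
  refine PosDef.of_dotProduct_mulVec_pos hM fun c hc => ?_
  rw [star_trivial, ← integral_sum_mul_pow_sq hYpow]
  refine (integral_nonneg fun ω => sq_nonneg _).lt_of_ne fun h0 => ?_
  obtain ⟨S, hS, hroots⟩ := exists_finset_card_le_of_sum_mul_pow_eq_zero hc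
  have hzero := (integral_eq_zero_iff_of_nonneg (fun ω => sq_nonneg _)
    (memLp_sum_mul_pow hYpow c).integrable_sq).1 h0.symm
  have hmem : ∀ᵐ ω ∂P, ω ∈ Y ⁻¹' S := by
    filter_upwards [hzero] with ω hω
    exact hroots _ (pow_eq_zero_iff two_ne_zero |>.1 hω)
  refine hsupp S hS ?_
  rw [← measure_univ (μ := P)]
  exact measure_congr (ae_eq_univ.2 (ae_iff.1 hmem))

end Moments

theorem pmmse_formula_general
    {Ω : Type*} [MeasurableSpace Ω] (P : Measure Ω) [IsProbabilityMeasure P]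
    (X Y : Ω → ℝ) (hYm : Measurable Y) (n : ℕ)
    (hX2 : MemLp X 2 P)
    (hY : Integrable (fun ω => Y ω ^ (2 * n)) P)
    (hsupp : ∀ S : Finset ℝ, S.card ≤ n → P (Y ⁻¹' (S : Set ℝ)) ≠ 1) :
    IsUnit (hankelMoment P Y n) ∧
      (∀ c : Fin (n + 1) → ℝ,
        (∫ ω, (X ω - ∑ j : Fin (n + 1),
            ((hankelMoment P Y n)⁻¹.mulVec (momVec P X Y n)) j * Y ω ^ (j : ℕ)) ^ 2 ∂P) ≤
          ∫ ω, (X ω - ∑ j : Fin (n + 1), c j * Y ω ^ (j : ℕ)) ^ 2 ∂P) ∧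
      pmmse P X Y n =
        (∫ ω, X ω ^ 2 ∂P) -
          momVec P X Y n ⬝ᵥ ((hankelMoment P Y n)⁻¹.mulVec (momVec P X Y n)) := by
  have hYpow (j : Fin (n + 1)) : MemLp (fun ω => Y ω ^ (j : ℕ)) 2 P :=
    memLp_two_pow_of_integrable_pow_two_mul hYm.aestronglyMeasurable hY (Nat.lt_succ_iff.1 j.2)
  have hM := hankelMoment_posDef hYpow hsupp
  set M := hankelMoment P Y n
  set v := momVec P X Y n
  set c₀ := M⁻¹ *ᵥ v
  have hobj (c : Fin (n + 1) → ℝ) :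
      ∫ ω, (X ω - ∑ j : Fin (n + 1), c j * Y ω ^ (j : ℕ)) ^ 2 ∂P =
        ∫ ω, X ω ^ 2 ∂P - v ⬝ᵥ c₀ + (c - c₀) ⬝ᵥ M *ᵥ (c - c₀) := by
    rw [integral_sq_sub_sum_mul_pow hYpow hX2,
      complete_square_dotProduct_mulVec (hankelMoment_transpose P Y n) hM.isUnit]
  have hmin (c : Fin (n + 1) → ℝ) :
      ∫ ω, (X ω - ∑ j : Fin (n + 1), c₀ j * Y ω ^ (j : ℕ)) ^ 2 ∂P ≤
        ∫ ω, (X ω - ∑ j : Fin (n + 1), c j * Y ω ^ (j : ℕ)) ^ 2 ∂P := by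
    rw [hobj, hobj, sub_self, mulVec_zero, dotProduct_zero, add_zero]
    simpa using hM.posSemidef.dotProduct_mulVec_nonneg (c - c₀)
  refine ⟨hM.isUnit, hmin, ?_⟩
  have hvalue := hobj c₀
  rw [sub_self, mulVec_zero, dotProduct_zero, add_zero] at hvalue
  rw [← hvalue]
  exact (IsLeast.isGLB ⟨Set.mem_range_self c₀, Set.forall_mem_range.2 hmin⟩).ciInf_eq

/-- With `E[X²] < ∞`, `E[Y^{2n}] < ∞`, and `|supp(Y)| > n`: the Hankel
moment matrix `M := M_{Y,n}` is invertible, `c* = M⁻¹ v` minimizes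
`c ↦ E[(X - ∑_j c_j Y^j)²]`, and `pmmse_n(X|Y) = E[X²] - vᵀ M⁻¹ v`. -/
theorem pmmse_formula
    {Ω : Type*} [MeasurableSpace Ω] (P : Measure Ω) [IsProbabilityMeasure P]
    (X Y : Ω → ℝ) (hXm : Measurable X) (hYm : Measurable Y) (n : ℕ)
    (hX2 : MemLp X 2 P)
    (hY : Integrable (fun ω => Y ω ^ (2 * n)) P)
    (hsupp : ∀ S : Finset ℝ, S.card ≤ n → P (Y ⁻¹' (S : Set ℝ)) ≠ 1) :
    IsUnit (hankelMoment P Y n) ∧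
      (∀ c : Fin (n + 1) → ℝ,
        (∫ ω, (X ω - ∑ j : Fin (n + 1),
            ((hankelMoment P Y n)⁻¹.mulVec (momVec P X Y n)) j * Y ω ^ (j : ℕ)) ^ 2 ∂P) ≤
          ∫ ω, (X ω - ∑ j : Fin (n + 1), c j * Y ω ^ (j : ℕ)) ^ 2 ∂P) ∧
      pmmse P X Y n =
        (∫ ω, X ω ^ 2 ∂P) -
          momVec P X Y n ⬝ᵥ ((hankelMoment P Y n)⁻¹.mulVec (momVec P X Y n)) :=
  pmmse_formula_general P X Y hYm n hX2 hY hsupp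
end

section
/- Let Y be a real-valued random variable and n ∈ ℕ with E[Y^{2n}] < ∞. Then the Hankel moment matrix M_{Y,n} = (E[Y^{i+j}])_{0≤i,j≤n} is invertible if and only if |supp(Y)| > n. -/
/-!
The Hankel matrix is the Gram matrix of `1, Y, …, Yⁿ` in `L²(P)`: `c ⬝ M c = E[(∑ cⱼ Yʲ)²]`, so
`M c = 0` iff the polynomial `∑ cⱼ Xʲ` vanishes at `Y` almost surely. A nonzero polynomial of degree
at most `n` vanishes almost surely at `Y` iff `Y` lies almost surely in a set of at most `n` points:
its roots one way, `∏_{s ∈ S} (X - s)` the other.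
-/

open MeasureTheory

open Polynomial Matrix

theorem exists_ne_zero_eventually_sum_mul_pow_eq_zero_iff {Ω R : Type*} [CommRing R] [IsDomain R]
    (l : Filter Ω) (Y : Ω → R) (n : ℕ) :
    (∃ c : Fin (n + 1) → R, c ≠ 0 ∧ ∀ᶠ ω in l, ∑ j, c j * Y ω ^ (j : ℕ) = 0) ↔
      ∃ S : Finset R, S.card ≤ n ∧ ∀ᶠ ω in l, Y ω ∈ S := by
  classical
  constructor
  · rintro ⟨c, hc, hY⟩
    obtain ⟨⟨p, hp⟩, rfl⟩ := (degreeLTEquiv R (n + 1)).surjective c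
    have hp0 : p ≠ 0 := fun h => hc (by simp [h])
    refine ⟨p.roots.toFinset, ?_, ?_⟩
    · calc p.roots.toFinset.card ≤ p.roots.card := Multiset.toFinset_card_le _
        _ ≤ p.natDegree := card_roots' p
        _ ≤ n := Nat.lt_succ_iff.mp ((natDegree_lt_iff_degree_lt hp0).mpr (mem_degreeLT.mp hp))
    · filter_upwards [hY] with ω hω
      rw [Multiset.mem_toFinset, mem_roots hp0, IsRoot, eval_eq_sum_degreeLTEquiv hp]
      exact hω
  · rintro ⟨S, hS, hY⟩
    set p : R[X] := ∏ s ∈ S, (X - C s)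
    have hp : p ∈ degreeLT R (n + 1) := by
      refine mem_degreeLT.mpr (degree_le_natDegree.trans_lt ?_)
      exact_mod_cast Nat.lt_succ_of_le ((natDegree_finsetProd_X_sub_C_eq_card S id).trans_le hS)
    refine ⟨degreeLTEquiv R (n + 1) ⟨p, hp⟩, ?_, ?_⟩
    · rw [Ne, degreeLTEquiv_eq_zero_iff_eq_zero hp]
      exact (monic_prod_X_sub_C id S).ne_zero
    · filter_upwards [hY] with ω hω
      rw [← eval_eq_sum_degreeLTEquiv hp, eval_prod]
      exact Finset.prod_eq_zero hω (by simp)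

section integralGram

variable {Ω ι : Type*} [MeasurableSpace Ω] [Fintype ι]

noncomputable def integralGram (μ : Measure Ω) (f : ι → Ω → ℝ) : Matrix ι ι ℝ :=
  Matrix.of fun i j => ∫ ω, f i ω * f j ω ∂μ

variable {μ : Measure Ω} {f : ι → Ω → ℝ}

lemma integrable_mul_sum_mul (hf : ∀ i j, Integrable (fun ω => f i ω * f j ω) μ)
    (c : ι → ℝ) (i : ι) : Integrable (fun ω => f i ω * ∑ j, c j * f j ω) μ := by
  simp_rw [Finset.mul_sum, mul_left_comm (f i _)]
  exact integrable_finsetSum _ fun j _ => (hf i j).const_mul (c j)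

lemma integralGram_mulVec_apply (hf : ∀ i j, Integrable (fun ω => f i ω * f j ω) μ)
    (c : ι → ℝ) (i : ι) :
    (integralGram μ f *ᵥ c) i = ∫ ω, f i ω * ∑ j, c j * f j ω ∂μ := by
  simp_rw [Matrix.mulVec, dotProduct, integralGram, Matrix.of_apply, ← integral_mul_const,
    Finset.mul_sum, mul_left_comm (f i _), mul_comm (c _)]
  exact (integral_finsetSum _ fun j _ => (hf i j).mul_const (c j)).symm

lemma dotProduct_integralGram_mulVec (hf : ∀ i j, Integrable (fun ω => f i ω * f j ω) μ)
    (c : ι → ℝ) :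
    c ⬝ᵥ (integralGram μ f *ᵥ c) = ∫ ω, (∑ j, c j * f j ω) ^ 2 ∂μ := by
  simp_rw [dotProduct, integralGram_mulVec_apply hf, ← integral_const_mul]
  rw [← integral_finsetSum _ fun i _ => (integrable_mul_sum_mul hf c i).const_mul (c i)]
  simp_rw [← mul_assoc, ← Finset.sum_mul, sq]

theorem integralGram_mulVec_eq_zero_iff (hf : ∀ i j, Integrable (fun ω => f i ω * f j ω) μ)
    (c : ι → ℝ) : integralGram μ f *ᵥ c = 0 ↔ ∀ᵐ ω ∂μ, ∑ j, c j * f j ω = 0 := by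
  constructor
  · intro hc
    have hsq : Integrable (fun ω => (∑ j, c j * f j ω) ^ 2) μ := by
      simp_rw [sq, Finset.sum_mul, mul_assoc]
      exact integrable_finsetSum _ fun i _ => (integrable_mul_sum_mul hf c i).const_mul (c i)
    have h0 : ∫ ω, (∑ j, c j * f j ω) ^ 2 ∂μ = 0 := by
      rw [← dotProduct_integralGram_mulVec hf, hc, dotProduct_zero]
    filter_upwards [(integral_eq_zero_iff_of_nonneg (fun _ => sq_nonneg _) hsq).mp h0] with ω hω
    exact pow_eq_zero_iff two_ne_zero |>.mp hω
  · intro hc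
    ext i
    rw [integralGram_mulVec_apply hf, Pi.zero_apply]
    exact integral_eq_zero_of_ae (by filter_upwards [hc] with ω hω; simp [hω])

end integralGram

lemma integrable_pow_of_le_two_mul {Ω : Type*} [MeasurableSpace Ω] {μ : Measure Ω}
    [IsFiniteMeasure μ] {Y : Ω → ℝ} (hY : AEStronglyMeasurable Y μ) {n k : ℕ} (hk : k ≤ 2 * n)
    (h : Integrable (fun ω => Y ω ^ (2 * n)) μ) : Integrable (fun ω => Y ω ^ k) μ := by
  have h' : Integrable (fun ω => ‖Y ω‖ ^ (2 * n)) μ := by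
    simpa only [Real.norm_eq_abs, (even_two_mul n).pow_abs] using h
  refine (integrable_norm_iff (hY.pow k)).mp ?_
  simpa only [Pi.pow_apply, norm_pow] using integrable_norm_pow_of_le hY hk h'

lemma hankelMoment_eq_integralGram {Ω : Type*} [MeasurableSpace Ω] (P : Measure Ω)
    (Y : Ω → ℝ) (n : ℕ) :
    hankelMoment P Y n = integralGram P fun (i : Fin (n + 1)) ω => Y ω ^ (i : ℕ) := by
  ext i j
  simp [hankelMoment, integralGram, pow_add]

/-- For a random variable `Y` with `E[Y^{2n}] < ∞`, the Hankel moment matrix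
`M_{Y,n}` is invertible iff there is no finite set `S` of cardinality at most `n`
with `P(Y ∈ S) = 1`. -/
theorem hankelMoment_isUnit_iff
    {Ω : Type*} [MeasurableSpace Ω] (P : Measure Ω) [IsProbabilityMeasure P]
    (Y : Ω → ℝ) (hYm : Measurable Y) (n : ℕ)
    (hY : Integrable (fun ω => Y ω ^ (2 * n)) P) :
    IsUnit (hankelMoment P Y n) ↔
      ∀ S : Finset ℝ, S.card ≤ n → P (Y ⁻¹' (S : Set ℝ)) ≠ 1 := by
  have hmoments (i j : Fin (n + 1)) : Integrable (fun ω => Y ω ^ (i : ℕ) * Y ω ^ (j : ℕ)) P := by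
    simp_rw [← pow_add]
    exact integrable_pow_of_le_two_mul hYm.aestronglyMeasurable (by omega) hY
  have hsupp (S : Finset ℝ) : (∀ᵐ ω ∂P, Y ω ∈ S) ↔ P (Y ⁻¹' (S : Set ℝ)) = 1 := by
    rw [← measure_univ (μ := P)]
    exact ae_mem_iff_measure_eq (hYm S.measurableSet).nullMeasurableSet
  rw [isUnit_iff_isUnit_det, isUnit_iff_ne_zero, Ne, ← exists_mulVec_eq_zero_iff,
    hankelMoment_eq_integralGram]
  simp_rw [integralGram_mulVec_eq_zero_iff hmoments]
  rw [exists_ne_zero_eventually_sum_mul_pow_eq_zero_iff]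
  simp_rw [hsupp, not_exists, not_and]
end

section
/- Let n ≥ 1 be an integer and X a real-valued random variable with E[X^{2n}] < ∞, and let N be a standard Gaussian random variable independent of X. Set d_n := n(n+1)/2. Then there exists a real polynomial p of degree at most d_n such that det M_{√t·X + N, n} = p(t) for every t ≥ 0, and the coefficient of t^{d_n} in p equals det M_{X,n}; moreover det M_{X,n} ≠ 0 if and only if |supp(X)| > n. -/
/-!
Expanding `(s X + N) ^ m` binomially and using independence, the entry `(i, j)` of
`M_{sX+N,n}` is a polynomial in `s` of degree at most `i + j` with top coefficient `E[X^{i+j}]`,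
and since the odd Gaussian moments vanish only powers `s ^ k` with `k ≡ i + j (mod 2)` occur.
By the Leibniz formula, `D(s) := det M_{sX+N,n}` is therefore a polynomial of degree at most
`n(n+1)` with top coefficient `det M_{X,n}`, and `D(-s) = D(s)`, so `D(s) = p(s²)`.

For the support criterion, `vᵀ M_{X,n} v = E[q(X)²]` where `q` has coefficient vector `v`.
A kernel vector thus gives a nonzero `q` of degree `≤ n` with `q(X) = 0` a.s., so `X` lives on
the at most `n` roots of `q`; conversely, if `X ∈ S` a.s. then the coefficients of
`∏_{x ∈ S} (X - x)` form a kernel vector.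
-/

open MeasureTheory ProbabilityTheory

open Polynomial Finset
open scoped Matrix

namespace Polynomial

variable {R : Type*} [CommRing R]

lemma coeff_comp_neg_X (p : R[X]) (k : ℕ) : (p.comp (-X)).coeff k = (-1) ^ k * p.coeff k := by
  induction p using Polynomial.induction_on' with
  | add p q hp hq => simp [add_comp, hp, hq, mul_add]
  | monomial m a =>
    rw [← C_mul_X_pow_eq_monomial, mul_comp, C_comp, X_pow_comp, neg_pow, ← C_1, ← C_neg,
      ← C_pow, ← mul_assoc, ← C_mul, coeff_C_mul_X_pow, coeff_C_mul_X_pow]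
    split_ifs with h
    · rw [h, mul_comm]
    · rw [mul_zero]

lemma coeff_eq_zero_of_comp_neg_X_eq_self [NoZeroDivisors R] [CharZero R] {p : R[X]}
    (hp : p.comp (-X) = p) {k : ℕ} (hk : Odd k) : p.coeff k = 0 := by
  have h := coeff_comp_neg_X p k
  rw [hp, hk.neg_one_pow, neg_one_mul, eq_neg_iff_add_eq_zero] at h
  exact add_self_eq_zero.mp h

lemma expand_contract_two_of_comp_neg_X_eq_self [NoZeroDivisors R] [CharZero R] {p : R[X]}
    (hp : p.comp (-X) = p) : expand R 2 (contract 2 p) = p := by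
  ext k
  rw [coeff_expand two_pos, coeff_contract two_ne_zero]
  split_ifs with h
  · rw [Nat.div_mul_cancel h]
  · exact (coeff_eq_zero_of_comp_neg_X_eq_self hp (Nat.odd_iff.mpr (by omega))).symm

lemma natDegree_contract_le {m : ℕ} (hm : m ≠ 0) (p : R[X]) :
    (contract m p).natDegree ≤ p.natDegree / m := by
  refine natDegree_le_iff_coeff_eq_zero.mpr fun k hk => ?_
  rw [coeff_contract hm]
  exact coeff_eq_zero_of_natDegree_lt ((Nat.div_lt_iff_lt_mul (Nat.pos_of_ne_zero hm)).mp hk)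

lemma coeff_prod_sum_of_natDegree_le {ι : Type*} (s : Finset ι) (f : ι → R[X]) (d : ι → ℕ)
    (h : ∀ i ∈ s, (f i).natDegree ≤ d i) :
    (∏ i ∈ s, f i).coeff (∑ i ∈ s, d i) = ∏ i ∈ s, (f i).coeff (d i) := by
  induction s using Finset.cons_induction with
  | empty => simp
  | cons a s ha ih =>
    have hs : ∀ i ∈ s, (f i).natDegree ≤ d i := fun i hi => h i (mem_cons_of_mem hi)
    rw [prod_cons, sum_cons, prod_cons, coeff_mul_add_eq_of_natDegree_le
      (h a (mem_cons_self a s)) ((natDegree_prod_le s f).trans (sum_le_sum hs)), ih hs]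

end Polynomial

namespace Matrix

variable {R : Type*} [CommRing R] {ι : Type*} [Fintype ι] [DecidableEq ι]

lemma natDegree_det_le_of_natDegree_le (A : Matrix ι ι R[X]) (f g : ι → ℕ)
    (h : ∀ i j, (A i j).natDegree ≤ f i + g j) : A.det.natDegree ≤ ∑ i, f i + ∑ j, g j := by
  rw [det_apply']
  refine natDegree_sum_le_of_forall_le _ _ fun σ _ => ?_
  refine natDegree_mul_le.trans ?_
  rw [natDegree_intCast, zero_add]
  calc (∏ i, A (σ i) i).natDegree ≤ ∑ i, (f (σ i) + g i) :=
        (natDegree_prod_le _ _).trans (sum_le_sum fun i _ => h (σ i) i)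
    _ = ∑ i, f i + ∑ j, g j := by rw [sum_add_distrib, Equiv.sum_comp σ f]

lemma coeff_det_of_natDegree_le (A : Matrix ι ι R[X]) (f g : ι → ℕ)
    (h : ∀ i j, (A i j).natDegree ≤ f i + g j) :
    A.det.coeff (∑ i, f i + ∑ j, g j) = (of fun i j => (A i j).coeff (f i + g j)).det := by
  rw [det_apply', det_apply', finsetSum_coeff]
  refine sum_congr rfl fun σ _ => ?_
  have hsum : ∑ i, f i + ∑ j, g j = ∑ i, (f (σ i) + g i) := by
    rw [sum_add_distrib, Equiv.sum_comp σ f]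
  rw [← C_eq_intCast, coeff_C_mul, hsum,
    coeff_prod_sum_of_natDegree_le _ _ _ fun i _ => h (σ i) i]
  rfl

lemma det_comp_neg_X (A : Matrix ι ι R[X]) (f g : ι → ℕ)
    (h : ∀ i j, (A i j).comp (-X) = (-1) ^ (f i + g j) * A i j) :
    A.det.comp (-X) = (-1) ^ (∑ i, f i + ∑ j, g j) * A.det := by
  have hmap : (compRingHom (-X)).mapMatrix A
      = diagonal (fun i => (-1) ^ f i) * A * diagonal (fun j => (-1) ^ g j) := by
    refine Matrix.ext fun i j => ?_
    simp only [RingHom.mapMatrix_apply, map_apply, coe_compRingHom_apply, h, pow_add,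
      diagonal_mul, mul_diagonal]
    ring
  have := RingHom.map_det (compRingHom (-X : R[X])) A
  rw [hmap, det_mul, det_mul, det_diagonal, det_diagonal, prod_pow_eq_pow_sum,
    prod_pow_eq_pow_sum] at this
  rw [← coe_compRingHom_apply, this, pow_add]
  ring

end Matrix

section MomentPoly

variable {R : Type*} [CommRing R]

/-- For independent `X`, `N` with moment sequences `a`, `b`, this is `s ↦ E[(s X + N) ^ m]`. -/
noncomputable def momentPoly (a b : ℕ → R) (m : ℕ) : R[X] :=
  ∑ k ∈ range (m + 1), C ((m.choose k : R) * a k * b (m - k)) * X ^ k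

lemma coeff_momentPoly (a b : ℕ → R) (m k : ℕ) :
    (momentPoly a b m).coeff k = m.choose k * a k * b (m - k) := by
  simp only [momentPoly, finsetSum_coeff, coeff_C_mul_X_pow, sum_ite_eq, mem_range]
  split_ifs with hk
  · rfl
  · rw [Nat.choose_eq_zero_of_lt (by omega), Nat.cast_zero, zero_mul, zero_mul]

lemma eval_momentPoly (a b : ℕ → R) (m : ℕ) (s : R) :
    (momentPoly a b m).eval s
      = ∑ k ∈ range (m + 1), m.choose k * a k * b (m - k) * s ^ k := by
  simp [momentPoly, eval_finsetSum]

lemma natDegree_momentPoly_le (a b : ℕ → R) (m : ℕ) : (momentPoly a b m).natDegree ≤ m :=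
  natDegree_sum_le_of_forall_le _ _ fun k hk =>
    natDegree_C_mul_X_pow_le _ k |>.trans (Nat.lt_succ_iff.mp (mem_range.mp hk))

lemma momentPoly_comp_neg_X (a : ℕ → R) {b : ℕ → R} (hb : ∀ k, Odd k → b k = 0) (m : ℕ) :
    (momentPoly a b m).comp (-X) = (-1) ^ m * momentPoly a b m := by
  ext k
  rw [coeff_comp_neg_X, ← C_1, ← C_neg, ← C_pow, coeff_C_mul, coeff_momentPoly]
  rcases lt_or_ge m k with hmk | hkm
  · simp [Nat.choose_eq_zero_of_lt hmk]
  rcases Nat.even_or_odd (m - k) with hev | hodd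
  · rw [show m = (m - k) + k by omega, pow_add, hev.neg_one_pow, one_mul]
  · simp [hb _ hodd]

end MomentPoly

section Moments

variable {Ω : Type*} [MeasurableSpace Ω] {P : Measure Ω}

lemma integrable_pow_of_le [IsFiniteMeasure P] {X : Ω → ℝ} (hX : AEStronglyMeasurable X P)
    {k m : ℕ} (hkm : k ≤ m) (hm : Integrable (fun ω => X ω ^ m) P) :
    Integrable (fun ω => X ω ^ k) P := by
  refine ((integrable_const 1).add hm.abs).mono' (hX.pow k) (ae_of_all _ fun ω => ?_)
  rw [Real.norm_eq_abs, abs_pow, Pi.add_apply, abs_pow]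
  rcases le_or_gt |X ω| 1 with h1 | h1
  · linarith [pow_le_one₀ (abs_nonneg (X ω)) h1 (n := k), pow_nonneg (abs_nonneg (X ω)) m]
  · linarith [pow_le_pow_right₀ h1.le hkm]

lemma integrable_pow_gaussianReal (μ : ℝ) (v : NNReal) (k : ℕ) :
    Integrable (fun x : ℝ => x ^ k) (gaussianReal μ v) :=
  integrable_pow_of_integrable_exp_mul (X := id) one_ne_zero
    (integrable_exp_mul_gaussianReal 1) (integrable_exp_mul_gaussianReal (-1)) k

lemma integral_pow_gaussianReal_of_odd (v : NNReal) {k : ℕ} (hk : Odd k) :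
    ∫ x, x ^ k ∂gaussianReal 0 v = 0 := by
  have hneg : ∫ x, x ^ k ∂gaussianReal 0 v = -∫ x, x ^ k ∂gaussianReal 0 v := by
    conv_lhs => rw [← neg_zero, ← gaussianReal_map_neg,
      integral_map (by fun_prop) (by fun_prop)]
    simp [hk.neg_pow, integral_neg]
  linarith

lemma integral_mul_add_pow_eq_eval_momentPoly {X N : Ω → ℝ} (hindep : IndepFun X N P)
    {m : ℕ} (hX : ∀ k ≤ m, Integrable (fun ω => X ω ^ k) P)
    (hN : ∀ k ≤ m, Integrable (fun ω => N ω ^ k) P) (s : ℝ) :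
    ∫ ω, (s * X ω + N ω) ^ m ∂P
      = (momentPoly (fun k => ∫ ω, X ω ^ k ∂P) (fun k => ∫ ω, N ω ^ k ∂P) m).eval s := by
  have hindep_pow : ∀ k, IndepFun (fun ω => X ω ^ k) (fun ω => N ω ^ (m - k)) P := fun k =>
    hindep.comp (measurable_id.pow_const k) (measurable_id.pow_const (m - k))
  have hXk : ∀ k ∈ range (m + 1), Integrable (fun ω => X ω ^ k) P :=
    fun k hk => hX k (Nat.lt_succ_iff.mp (mem_range.mp hk))
  have hint : ∀ k ∈ range (m + 1), Integrable (fun ω => X ω ^ k * N ω ^ (m - k)) P :=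
    fun k hk => (hindep_pow k).integrable_mul (hXk k hk) (hN _ (Nat.sub_le m k))
  have hexp : ∀ ω, (s * X ω + N ω) ^ m
      = ∑ k ∈ range (m + 1), (m.choose k * s ^ k) * (X ω ^ k * N ω ^ (m - k)) := by
    intro ω
    rw [add_pow]
    exact sum_congr rfl fun k _ => by ring
  simp only [hexp]
  rw [integral_finsetSum _ fun k hk => (hint k hk).const_mul _, eval_momentPoly]
  refine sum_congr rfl fun k hk => ?_
  rw [integral_const_mul, (hindep_pow k).integral_fun_mul_eq_mul_integral
    (hXk k hk).aestronglyMeasurable (hN _ (Nat.sub_le m k)).aestronglyMeasurable]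
  ring

end Moments

section Hankel

variable {R : Type*} [CommRing R]

/-- For independent `X`, `N` with moment sequences `a`, `b`, this is `s ↦ E[(s X + N) ^ m]`. -/
noncomputable def momentPolyHankel (a b : ℕ → R) (n : ℕ) :
    Matrix (Fin (n + 1)) (Fin (n + 1)) R[X] :=
  Matrix.of fun i j => momentPoly a b (i + j)

lemma sum_fin_val_add_sum_fin_val (n : ℕ) :
    ∑ i : Fin (n + 1), (i : ℕ) + ∑ j : Fin (n + 1), (j : ℕ) = n * (n + 1) := by
  rw [← two_mul, Fin.sum_univ_eq_sum_range (fun i => i), mul_comm, sum_range_id_mul_two,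
    Nat.add_sub_cancel, mul_comm]

lemma natDegree_det_momentPolyHankel_le (a b : ℕ → R) (n : ℕ) :
    (momentPolyHankel a b n).det.natDegree ≤ n * (n + 1) := by
  rw [← sum_fin_val_add_sum_fin_val n]
  exact Matrix.natDegree_det_le_of_natDegree_le _ Fin.val Fin.val
    fun _ _ => natDegree_momentPoly_le a b _

lemma coeff_det_momentPolyHankel (a : ℕ → R) {b : ℕ → R} (hb : b 0 = 1) (n : ℕ) :
    (momentPolyHankel a b n).det.coeff (n * (n + 1))
      = (Matrix.of fun i j : Fin (n + 1) => a (i + j)).det := by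
  rw [← sum_fin_val_add_sum_fin_val n, Matrix.coeff_det_of_natDegree_le
    (momentPolyHankel a b n) Fin.val Fin.val fun _ _ => natDegree_momentPoly_le a b _]
  simp [momentPolyHankel, coeff_momentPoly, hb]

lemma det_momentPolyHankel_comp_neg_X (a : ℕ → R) {b : ℕ → R} (hb : ∀ k, Odd k → b k = 0)
    (n : ℕ) : (momentPolyHankel a b n).det.comp (-X) = (momentPolyHankel a b n).det := by
  rw [Matrix.det_comp_neg_X (momentPolyHankel a b n) Fin.val Fin.val
      fun _ _ => momentPoly_comp_neg_X a hb _, sum_fin_val_add_sum_fin_val,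
    (Nat.even_mul_succ_self n).neg_one_pow, one_mul]

end Hankel

section HankelMoment

variable {Ω : Type*} [MeasurableSpace Ω] {P : Measure Ω} {Y : Ω → ℝ} {n : ℕ}

lemma Fin.val_add_val_le (i j : Fin (n + 1)) : (i : ℕ) + j ≤ 2 * n := by
  omega

lemma hankelMoment_det_eq_eval {N : Ω → ℝ} (hindep : IndepFun Y N P)
    (hY : ∀ k ≤ 2 * n, Integrable (fun ω => Y ω ^ k) P)
    (hN : ∀ k ≤ 2 * n, Integrable (fun ω => N ω ^ k) P) (s : ℝ) :
    (hankelMoment P (fun ω => s * Y ω + N ω) n).det =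
      (momentPolyHankel (fun k => ∫ ω, Y ω ^ k ∂P) (fun k => ∫ ω, N ω ^ k ∂P) n).det.eval s := by
  rw [← coe_evalRingHom, RingHom.map_det]
  congr 1
  ext i j
  exact integral_mul_add_pow_eq_eval_momentPoly hindep
    (fun k hk => hY k (hk.trans (Fin.val_add_val_le i j)))
    (fun k hk => hN k (hk.trans (Fin.val_add_val_le i j))) s

lemma integrable_eval_comp {m : ℕ} (hY : ∀ k ≤ m, Integrable (fun ω => Y ω ^ k) P) {q : ℝ[X]}
    (hq : q.natDegree ≤ m) : Integrable (fun ω => q.eval (Y ω)) P := by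
  simp only [eval_eq_sum_range' (Nat.lt_succ_of_le hq)]
  exact integrable_finsetSum _ fun k hk =>
    (hY k (Nat.lt_succ_iff.mp (mem_range.mp hk))).const_mul _

lemma hankelMoment_mulVec_coeff (hY : ∀ k ≤ 2 * n, Integrable (fun ω => Y ω ^ k) P)
    {q : ℝ[X]} (hq : q.natDegree ≤ n) (i : Fin (n + 1)) :
    (hankelMoment P Y n *ᵥ fun j => q.coeff j) i = ∫ ω, Y ω ^ (i : ℕ) * q.eval (Y ω) ∂P := by
  have heval (x : ℝ) :
      x ^ (i : ℕ) * q.eval x = ∑ j : Fin (n + 1), x ^ ((i : ℕ) + j) * q.coeff j := by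
    rw [eval_eq_sum_range' (Nat.lt_succ_of_le hq),
      ← Fin.sum_univ_eq_sum_range (fun j => q.coeff j * x ^ j), mul_sum]
    exact sum_congr rfl fun j _ => by ring
  simp only [Matrix.mulVec, dotProduct, hankelMoment, Matrix.of_apply, heval]
  rw [integral_finsetSum _ fun j _ => (hY _ (Fin.val_add_val_le i j)).mul_const _]
  exact sum_congr rfl fun j _ => (integral_mul_const _ _).symm

lemma dotProduct_hankelMoment_mulVec_coeff
    (hY : ∀ k ≤ 2 * n, Integrable (fun ω => Y ω ^ k) P) {q : ℝ[X]} (hq : q.natDegree ≤ n) :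
    (fun i : Fin (n + 1) => q.coeff i) ⬝ᵥ (hankelMoment P Y n *ᵥ fun j => q.coeff j)
      = ∫ ω, q.eval (Y ω) ^ 2 ∂P := by
  have hint : ∀ i : Fin (n + 1), Integrable (fun ω => Y ω ^ (i : ℕ) * q.eval (Y ω)) P := by
    intro i
    simpa using integrable_eval_comp hY ((natDegree_mul_le (p := X ^ (i : ℕ)) (q := q)).trans
      (by rw [natDegree_X_pow]; omega))
  simp only [dotProduct, hankelMoment_mulVec_coeff hY hq, ← integral_const_mul]
  rw [← integral_finsetSum _ fun i _ => (hint i).const_mul _]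
  congr 1
  ext ω
  rw [eval_eq_sum_range' (Nat.lt_succ_of_le hq),
    ← Fin.sum_univ_eq_sum_range (fun j => q.coeff j * Y ω ^ j), sq, sum_mul]
  exact sum_congr rfl fun i _ => by ring

theorem hankelMoment_det_eq_zero_iff (hY : ∀ k ≤ 2 * n, Integrable (fun ω => Y ω ^ k) P) :
    (hankelMoment P Y n).det = 0 ↔ ∃ S : Finset ℝ, S.card ≤ n ∧ ∀ᵐ ω ∂P, Y ω ∈ S := by
  rw [← Matrix.exists_mulVec_eq_zero_iff]
  constructor
  · rintro ⟨v, hv, hMv⟩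
    set q : ℝ[X] := ((degreeLTEquiv ℝ (n + 1)).symm v : ℝ[X])
    have hqv : (fun j : Fin (n + 1) => q.coeff j) = v :=
      (degreeLTEquiv ℝ (n + 1)).apply_symm_apply v
    have hq0 : q ≠ 0 := fun h => hv (by rw [← hqv, h]; ext; simp)
    have hqn : q.natDegree ≤ n := Nat.lt_succ_iff.mp <| (natDegree_lt_iff_degree_lt hq0).mpr
      (mem_degreeLT.mp ((degreeLTEquiv ℝ (n + 1)).symm v).2)
    have hsq : ∫ ω, q.eval (Y ω) ^ 2 ∂P = 0 := by
      rw [← dotProduct_hankelMoment_mulVec_coeff hY hqn, hqv, hMv, dotProduct_zero]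
    have hint : Integrable (fun ω => q.eval (Y ω) ^ 2) P := by
      simpa using integrable_eval_comp hY ((natDegree_pow_le (p := q) (n := 2)).trans (by omega))
    have hae : ∀ᵐ ω ∂P, q.eval (Y ω) ^ 2 = 0 :=
      (integral_eq_zero_iff_of_nonneg (fun ω => sq_nonneg _) hint).mp hsq
    refine ⟨q.roots.toFinset, (Multiset.toFinset_card_le _).trans ((card_roots' q).trans hqn),
      hae.mono fun ω hω => ?_⟩
    simpa [hq0] using hω
  · rintro ⟨S, hS, hYS⟩
    set q : ℝ[X] := ∏ x ∈ S, (X - C x)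
    have hqS : q.natDegree = S.card := natDegree_finsetProd_X_sub_C_eq_card S id
    refine ⟨fun j => q.coeff j, fun h => ?_, funext fun i => ?_⟩
    · have := congr_fun h ⟨S.card, by omega⟩
      simp only [← hqS, Pi.zero_apply] at this
      exact one_ne_zero ((monic_prod_X_sub_C id S).coeff_natDegree.symm.trans this)
    · rw [hankelMoment_mulVec_coeff hY (hqS.trans_le hS), Pi.zero_apply]
      exact integral_eq_zero_of_ae (hYS.mono fun ω hω => by
        simp [q, eval_prod, prod_eq_zero hω])

end HankelMoment

theorem det_hankel_gaussian_polynomial_general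
    {Ω : Type*} [MeasurableSpace Ω] (P : Measure Ω) [IsProbabilityMeasure P]
    (X N : Ω → ℝ) (hXm : Measurable X) (hNm : Measurable N)
    (n : ℕ)
    (hX2n : Integrable (fun ω => X ω ^ (2 * n)) P)
    (hN : Measure.map N P = gaussianReal 0 1)
    (hindep : IndepFun X N P) :
    ∃ p : Polynomial ℝ,
      p.natDegree ≤ n * (n + 1) / 2 ∧
      (∀ t : ℝ, 0 ≤ t →
        (hankelMoment P (fun ω => Real.sqrt t * X ω + N ω) n).det = p.eval t) ∧
      p.coeff (n * (n + 1) / 2) = (hankelMoment P X n).det ∧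
      ((hankelMoment P X n).det ≠ 0 ↔
        ∀ S : Finset ℝ, S.card ≤ n → P (X ⁻¹' (S : Set ℝ)) ≠ 1) := by
  have hX : ∀ k ≤ 2 * n, Integrable (fun ω => X ω ^ k) P :=
    fun k hk => integrable_pow_of_le hXm.aestronglyMeasurable hk hX2n
  have hNint : ∀ k, Integrable (fun ω => N ω ^ k) P := fun k =>
    (integrable_map_measure (measurable_id.pow_const k).aestronglyMeasurable
      hNm.aemeasurable).mp (hN ▸ integrable_pow_gaussianReal 0 1 k)
  have hNmoment : ∀ k, ∫ ω, N ω ^ k ∂P = ∫ x, x ^ k ∂gaussianReal 0 1 := fun k => by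
    rw [← hN, integral_map hNm.aemeasurable (by fun_prop)]
  have hNodd : ∀ k, Odd k → ∫ ω, N ω ^ k ∂P = 0 := fun k hk => by
    rw [hNmoment, integral_pow_gaussianReal_of_odd 1 hk]
  set D := (momentPolyHankel (fun k => ∫ ω, X ω ^ k ∂P) (fun k => ∫ ω, N ω ^ k ∂P) n).det
  have hD_expand : expand ℝ 2 (contract 2 D) = D :=
    expand_contract_two_of_comp_neg_X_eq_self (det_momentPolyHankel_comp_neg_X _ hNodd n)
  refine ⟨contract 2 D, ?_, fun t ht => ?_, ?_, ?_⟩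
  · exact (natDegree_contract_le two_ne_zero D).trans
      (Nat.div_le_div_right (natDegree_det_momentPolyHankel_le _ _ n))
  · have h := congrArg (eval (Real.sqrt t)) hD_expand
    rw [expand_eval, Real.sq_sqrt ht] at h
    rw [hankelMoment_det_eq_eval hindep hX fun k _ => hNint k]
    exact h.symm
  · rw [coeff_contract two_ne_zero, Nat.div_mul_cancel (Nat.even_mul_succ_self n).two_dvd,
      coeff_det_momentPolyHankel _ (by simp) n]
    rfl
  · rw [ne_eq, hankelMoment_det_eq_zero_iff hX, not_exists]
    exact forall_congr' fun S => not_and.trans <| imp_congr_right fun _ =>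
      not_congr (mem_ae_iff_prob_eq_one (hXm S.finite_toSet.measurableSet))

/-- For `n ≥ 1`, `E[X^{2n}] < ∞`, and `N` a standard Gaussian independent of
`X`: `t ↦ det M_{√t·X+N, n}` is a polynomial of degree at most `d_n = n(n+1)/2` on `t ≥ 0`,
its coefficient of `t^{d_n}` is `det M_{X,n}`, and `det M_{X,n} ≠ 0` iff `|supp(X)| > n`. -/
theorem det_hankel_gaussian_polynomial
    {Ω : Type*} [MeasurableSpace Ω] (P : Measure Ω) [IsProbabilityMeasure P]
    (X N : Ω → ℝ) (hXm : Measurable X) (hNm : Measurable N)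
    (n : ℕ) (hn : 1 ≤ n)
    (hX2n : Integrable (fun ω => X ω ^ (2 * n)) P)
    (hN : Measure.map N P = gaussianReal 0 1)
    (hindep : IndepFun X N P) :
    ∃ p : Polynomial ℝ,
      p.natDegree ≤ n * (n + 1) / 2 ∧
      (∀ t : ℝ, 0 ≤ t →
        (hankelMoment P (fun ω => Real.sqrt t * X ω + N ω) n).det = p.eval t) ∧
      p.coeff (n * (n + 1) / 2) = (hankelMoment P X n).det ∧
      ((hankelMoment P X n).det ≠ 0 ↔
        ∀ S : Finset ℝ, S.card ≤ n → P (X ⁻¹' (S : Set ℝ)) ≠ 1) :=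
  det_hankel_gaussian_polynomial_general P X N hXm hNm n hX2n hN hindep
end

section
/- Let N be a standard Gaussian random variable. For every n ∈ ℕ, the determinant of the Hankel moment matrix of N satisfies det M_{N,n} = Π_{k=1}^{n} k!. -/
/-!
The moments of a standard Gaussian satisfy `m (i + 1) = i * m (i - 1)` (even moments are
`(2k - 1)‼`, odd ones vanish): Gaussian integration by parts on monomials. For the functional
`L (X ^ i) = m i` this reads `L (X * p) = L p'`, and together with the recursion
`He (k + 1) = X * He k - He k'` of the monic Hermite polynomials it gives
`L (He k * q) = L (q^(k))`. Hence `L (He k * X ^ j)` vanishes for `j < k` and equals `k! * m 0`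
for `j = k`: multiplying the Hankel matrix on the left by the unitriangular matrix of Hermite
coefficients makes it upper triangular with diagonal entries `k!`.
-/

open MeasureTheory ProbabilityTheory

open Polynomial Real
open scoped Nat

namespace Polynomial

variable {R : Type*} [CommRing R] (m : ℕ → R)

noncomputable def momentFunctional : R[X] →ₗ[R] R :=
  lsum fun i => LinearMap.id.smulRight (m i)

@[simp]
theorem momentFunctional_monomial (i : ℕ) (a : R) :
    momentFunctional m (monomial i a) = a * m i := by
  simp [momentFunctional]

theorem momentFunctional_X_pow (i : ℕ) : momentFunctional m (X ^ i) = m i := by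
  simp [← monomial_one_right_eq_X_pow]

theorem momentFunctional_mul_X_pow {p : R[X]} {n : ℕ} (hp : p.natDegree < n) (j : ℕ) :
    momentFunctional m (p * X ^ j) = ∑ i ∈ Finset.range n, p.coeff i * m (i + j) := by
  conv_lhs => rw [p.as_sum_range' n hp]
  simp [Finset.sum_mul, monomial_mul_X_pow]

variable {m}

theorem momentFunctional_X_mul (hm : ∀ i, m (i + 1) = i * m (i - 1)) (p : R[X]) :
    momentFunctional m (X * p) = momentFunctional m (derivative p) := by
  induction p using Polynomial.induction_on' with
  | add p q hp hq => simp only [mul_add, map_add, hp, hq]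
  | monomial i a =>
    rw [X_mul_monomial, derivative_monomial, momentFunctional_monomial,
      momentFunctional_monomial, hm]
    ring

theorem momentFunctional_hermite_mul (hm : ∀ i, m (i + 1) = i * m (i - 1)) (k : ℕ) (q : R[X]) :
    momentFunctional m ((hermite k).map (Int.castRingHom R) * q) =
      momentFunctional m (derivative^[k] q) := by
  induction k generalizing q with
  | zero => simp
  | succ k ih =>
    set h := (hermite k).map (Int.castRingHom R)
    have : (hermite (k + 1)).map (Int.castRingHom R) * q = X * (h * q) - derivative h * q := by
      rw [hermite_succ, Polynomial.map_sub, Polynomial.map_mul, derivative_map]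
      simp [h, sub_mul, mul_assoc]
    rw [this, map_sub, momentFunctional_X_mul hm, derivative_mul, map_add, add_sub_cancel_left,
      ih, Function.iterate_succ_apply]

theorem momentFunctional_hermite_mul_X_pow (hm : ∀ i, m (i + 1) = i * m (i - 1)) (k j : ℕ) :
    momentFunctional m ((hermite k).map (Int.castRingHom R) * X ^ j) =
      j.descFactorial k * m (j - k) := by
  rw [momentFunctional_hermite_mul hm, iterate_derivative_X_pow_eq_C_mul, ← smul_eq_C_mul,
    map_smul, momentFunctional_X_pow, smul_eq_mul]

end Polynomial

section Hankel

variable {R : Type*} [CommRing R]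

def hankel (m : ℕ → R) (n : ℕ) : Matrix (Fin n) (Fin n) R :=
  Matrix.of fun i j => m (i + j)

noncomputable def hermiteCoeffMatrix (n : ℕ) : Matrix (Fin n) (Fin n) R :=
  Matrix.of fun k i => ((hermite k).coeff i : R)

theorem det_hermiteCoeffMatrix (n : ℕ) : (hermiteCoeffMatrix n : Matrix _ _ R).det = 1 := by
  rw [Matrix.det_of_isLowerTriangular]
  · simp [hermiteCoeffMatrix, coeff_hermite_self]
  · intro k i hki
    simp [hermiteCoeffMatrix, coeff_hermite_of_lt (show (k : ℕ) < i from hki)]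

theorem hermiteCoeffMatrix_mul_hankel {m : ℕ → R} (hm : ∀ i, m (i + 1) = i * m (i - 1))
    (n : ℕ) : hermiteCoeffMatrix n * hankel m n =
      Matrix.of fun k j : Fin n => ((j : ℕ).descFactorial k : R) * m (j - k) := by
  ext k j
  have hdeg : ((hermite k).map (Int.castRingHom R)).natDegree < n :=
    natDegree_map_le.trans_lt (natDegree_hermite.trans_lt k.isLt)
  rw [Matrix.of_apply, ← momentFunctional_hermite_mul_X_pow hm, momentFunctional_mul_X_pow m hdeg,
    Matrix.mul_apply, ← Fin.sum_univ_eq_sum_range]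
  simp [hermiteCoeffMatrix, hankel]

theorem det_hankel {m : ℕ → R} (hm : ∀ i, m (i + 1) = i * m (i - 1)) (n : ℕ) :
    (hankel m n).det = ∏ k ∈ Finset.range n, ((k ! : R) * m 0) := by
  calc (hankel m n).det = (hermiteCoeffMatrix n * hankel m n).det := by
        rw [Matrix.det_mul, det_hermiteCoeffMatrix, one_mul]
    _ = ∏ k : Fin n, ((k ! : R) * m 0) := by
        rw [hermiteCoeffMatrix_mul_hankel hm, Matrix.det_of_isUpperTriangular]
        · simp [Nat.descFactorial_self]
        · intro k j hjk
          simp [Nat.descFactorial_eq_zero_iff_lt.2 (show (j : ℕ) < k from hjk)]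
    _ = ∏ k ∈ Finset.range n, ((k ! : R) * m 0) :=
        Fin.prod_univ_eq_prod_range (fun k => (k ! : R) * m 0) n

end Hankel

theorem integral_pow_two_mul_gaussianReal (k : ℕ) :
    ∫ x, x ^ (2 * k) ∂gaussianReal 0 1 = (2 * k - 1 : ℕ)‼ := by
  set f : ℝ → ℝ := fun t =>
    (√(2 * π))⁻¹ * (t ^ ((2 * k : ℕ) : ℝ) * rexp (-(1 / 2) * t ^ (2 : ℝ)))
  have hf : ∀ x : ℝ, gaussianPDFReal 0 1 x • x ^ (2 * k) = f |x| := by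
    intro x
    simp only [f, gaussianPDFReal_def, rpow_natCast, rpow_two, pow_mul, sq_abs, smul_eq_mul]
    push_cast
    ring_nf
  have hpow : (1 / 2 : ℝ) ^ (-(((2 * k : ℕ) : ℝ) + 1) / 2) = 2 ^ k * √2 := by
    rw [one_div, inv_rpow zero_le_two, ← rpow_neg zero_le_two,
      show -(-(((2 * k : ℕ) : ℝ) + 1) / 2) = k + 1 / 2 by push_cast; ring,
      rpow_add zero_lt_two, rpow_natCast, ← sqrt_eq_rpow]
  rw [integral_gaussianReal_eq_integral_smul one_ne_zero, integral_congr_ae (ae_of_all _ hf),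
    integral_comp_abs (f := f), integral_const_mul,
    integral_rpow_mul_exp_neg_mul_rpow zero_lt_two
      (neg_one_lt_zero.trans_le (Nat.cast_nonneg _)) one_half_pos,
    show (((2 * k : ℕ) : ℝ) + 1) / 2 = k + 1 / 2 by push_cast; ring, Gamma_nat_add_half, hpow,
    sqrt_mul zero_le_two]
  field_simp

theorem integral_pow_two_mul_add_one_gaussianReal (k : ℕ) :
    ∫ x, x ^ (2 * k + 1) ∂gaussianReal 0 1 = 0 := by
  have hsymm : ∫ x, x ^ (2 * k + 1) ∂gaussianReal 0 1 =
      ∫ x, (-x) ^ (2 * k + 1) ∂gaussianReal 0 1 := by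
    conv_lhs =>
      rw [← neg_zero, ← gaussianReal_map_neg, integral_map (by fun_prop) (by fun_prop)]
  simp only [Odd.neg_pow (⟨k, rfl⟩ : Odd (2 * k + 1)), integral_neg] at hsymm
  linarith

theorem integral_pow_add_one_gaussianReal (i : ℕ) :
    ∫ x, x ^ (i + 1) ∂gaussianReal 0 1 = i * ∫ x, x ^ (i - 1) ∂gaussianReal 0 1 := by
  obtain ⟨k, rfl | rfl⟩ := Nat.even_or_odd' i
  · rcases k with _ | k
    · simp
    rw [show 2 * (k + 1) - 1 = 2 * k + 1 by omega, integral_pow_two_mul_add_one_gaussianReal,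
      integral_pow_two_mul_add_one_gaussianReal, mul_zero]
  · rw [show 2 * k + 1 + 1 = 2 * (k + 1) by ring, show 2 * k + 1 - 1 = 2 * k by omega,
      integral_pow_two_mul_gaussianReal, integral_pow_two_mul_gaussianReal,
      show 2 * (k + 1) - 1 = 2 * k + 1 by omega, Nat.doubleFactorial_add_one]
    push_cast
    ring

theorem det_hankelMoment_gaussian_general
    {Ω : Type*} [MeasurableSpace Ω] (P : Measure Ω)
    (N : Ω → ℝ) (hNm : Measurable N)
    (hN : Measure.map N P = gaussianReal 0 1) (n : ℕ) :
    (hankelMoment P N n).det = ∏ k ∈ Finset.Icc 1 n, (Nat.factorial k : ℝ) := by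
  have hmoment (p : ℕ) : ∫ ω, N ω ^ p ∂P = ∫ x, x ^ p ∂gaussianReal 0 1 := by
    rw [← hN, integral_map hNm.aemeasurable (by fun_prop)]
  have hhankel :
      hankelMoment P N n = hankel (fun p => ∫ x, x ^ p ∂gaussianReal 0 1) (n + 1) := by
    ext i j
    simp [hankelMoment, hankel, hmoment]
  rw [hhankel, det_hankel integral_pow_add_one_gaussianReal, Finset.range_eq_Ico,
    Finset.prod_eq_prod_Ico_succ_bot n.succ_pos]
  simp [Finset.Ico_add_one_right_eq_Icc]

/-- For a standard Gaussian `N`, `det M_{N,n} = ∏_{k=1}^n k!`. -/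
theorem det_hankelMoment_gaussian
    {Ω : Type*} [MeasurableSpace Ω] (P : Measure Ω) [IsProbabilityMeasure P]
    (N : Ω → ℝ) (hNm : Measurable N)
    (hN : Measure.map N P = gaussianReal 0 1) (n : ℕ) :
    (hankelMoment P N n).det = ∏ k ∈ Finset.Icc 1 n, (Nat.factorial k : ℝ) :=
  det_hankelMoment_gaussian_general P N hNm hN n
end

section
/- Let m ≥ 1 and let p be a polynomial in m variables with real coefficients. If p(E[X], E[X²], …, E[X^m]) = 0 for every continuous real-valued random variable X (law absolutely continuous with respect to Lebesgue measure) satisfying E[|X|^m] < ∞, then p is the zero polynomial. -/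
open MeasureTheory


lemma mv_zero_of_prod : ∀ (n : ℕ) (p : MvPolynomial (Fin n) ℝ) (s : Fin n → Set ℝ),
    (∀ i, (s i).Infinite) →
    (∀ x : Fin n → ℝ, (∀ i, x i ∈ s i) → MvPolynomial.eval x p = 0) → p = 0 := by
  intro n
  induction n with
  | zero =>
    intro p s _ h
    apply MvPolynomial.funext
    intro x
    have hx : x = Fin.elim0 := funext fun i => i.elim0
    rw [map_zero, hx]
    exact h Fin.elim0 (fun i => i.elim0)
  | succ n ih =>
    intro p s hs h
    have key : ∀ k, (MvPolynomial.finSuccEquiv ℝ n p).coeff k = 0 := by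
      intro k
      apply ih _ (fun i => s i.succ) (fun i => hs i.succ)
      intro x hx
      have hq : (MvPolynomial.finSuccEquiv ℝ n p).map (MvPolynomial.eval x) = 0 := by
        apply Polynomial.eq_zero_of_infinite_isRoot
        apply Set.Infinite.mono _ (hs 0)
        intro y hy
        have : MvPolynomial.eval (Fin.cons y x) p = 0 := by
          apply h
          intro i
          refine Fin.cases ?_ ?_ i
          · simpa using hy
          · intro j; simpa using hx j
        simpa [Polynomial.IsRoot, ← MvPolynomial.eval_eq_eval_mv_eval'] using this
      have := congrArg (fun q => Polynomial.coeff q k) hq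
      simpa [Polynomial.coeff_map] using this
    have hz : MvPolynomial.finSuccEquiv ℝ n p = 0 := Polynomial.ext (by simp [key])
    exact (map_eq_zero_iff _ (AlgEquiv.injective _)).mp hz

lemma mv_zero_of_open {m : ℕ} (p : MvPolynomial (Fin m) ℝ) (U : Set (Fin m → ℝ))
    (hU : IsOpen U) (hne : U.Nonempty)
    (h : ∀ x ∈ U, MvPolynomial.eval x p = 0) : p = 0 := by
  obtain ⟨z, hz⟩ := hne
  obtain ⟨ε, hε, hball⟩ := Metric.isOpen_iff.mp hU z hz
  apply mv_zero_of_prod m p (fun i => Metric.ball (z i) ε)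
  · intro i
    rw [Real.ball_eq_Ioo]
    exact Set.infinite_coe_iff.mp <| Set.Ioo.infinite (show z i - ε < z i + ε by linarith)
  · intro x hx
    apply h
    apply hball
    rw [ball_pi _ hε]
    exact fun i _ => hx i

lemma abs_pow_le (n : ℕ) (x : ℝ) : |x| ^ n ≤ 1 + (x ^ 2) ^ n := by
  rcases le_or_gt (|x|) 1 with hx | hx
  · have h : |x| ^ n ≤ 1 := pow_le_one₀ (abs_nonneg x) hx
    have : (0:ℝ) ≤ (x ^ 2) ^ n := by positivity
    linarith
  · have h1 : |x| ≤ x ^ 2 := by nlinarith [abs_nonneg x, sq_abs x]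
    have : |x| ^ n ≤ (x ^ 2) ^ n := pow_le_pow_left₀ (abs_nonneg x) h1 n
    linarith

lemma pow_mul_exp_le {c : ℝ} (hc : 0 < c) (n : ℕ) (x : ℝ) :
    |x| ^ n * Real.exp (-(c * x ^ 2)) ≤ 1 + n.factorial / c ^ n := by
  have hE : (0:ℝ) < Real.exp (-(c * x ^ 2)) := Real.exp_pos _
  have key : (c * x ^ 2) ^ n ≤ n.factorial * Real.exp (c * x ^ 2) := by
    have h1 : (c * x ^ 2) ^ n / n.factorial ≤ Real.exp (c * x ^ 2) := by
      calc (c * x ^ 2) ^ n / n.factorial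
          ≤ ∑ i ∈ Finset.range (n + 1), (c * x ^ 2) ^ i / i.factorial :=
            Finset.single_le_sum (f := fun i => (c * x ^ 2) ^ i / i.factorial)
              (fun i _ => by positivity) (Finset.self_mem_range_succ n)
        _ ≤ Real.exp (c * x ^ 2) := Real.sum_le_exp_of_nonneg (by positivity) (n + 1)
    have hf : (0:ℝ) < n.factorial := by exact_mod_cast n.factorial_pos
    rw [div_le_iff₀ hf] at h1
    linarith [h1]
  have h2 : (x ^ 2) ^ n * Real.exp (-(c * x ^ 2)) ≤ n.factorial / c ^ n := by
    rw [le_div_iff₀ (pow_pos hc n)]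
    have e1 : (x ^ 2) ^ n * Real.exp (-(c * x ^ 2)) * c ^ n
        = (c * x ^ 2) ^ n * Real.exp (-(c * x ^ 2)) := by rw [mul_pow]; ring
    rw [e1]
    calc (c * x ^ 2) ^ n * Real.exp (-(c * x ^ 2))
        ≤ (n.factorial * Real.exp (c * x ^ 2)) * Real.exp (-(c * x ^ 2)) :=
          mul_le_mul_of_nonneg_right key hE.le
      _ = n.factorial := by rw [mul_assoc, ← Real.exp_add]; simp
  have h1 : |x| ^ n * Real.exp (-(c * x ^ 2))
      ≤ (1 + (x ^ 2) ^ n) * Real.exp (-(c * x ^ 2)) :=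
    mul_le_mul_of_nonneg_right (abs_pow_le n x) hE.le
  have h3 : Real.exp (-(c * x ^ 2)) ≤ 1 := Real.exp_le_one_iff.mpr (by nlinarith [sq_nonneg x])
  nlinarith [h2, h3]

lemma integrable_abs_pow_gauss {c : ℝ} (hc : 0 < c) (n : ℕ) :
    Integrable fun x : ℝ => |x| ^ n * Real.exp (-(c * x ^ 2)) := by
  have h2 : (0:ℝ) < c / 2 := by linarith
  apply Integrable.mono'
    (g := fun x => (1 + n.factorial / (c / 2) ^ n) * Real.exp (-(c / 2) * x ^ 2))
    ((integrable_exp_neg_mul_sq h2).const_mul _)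
  · exact ((continuous_abs.pow n).mul (Real.continuous_exp.comp (by continuity))).aestronglyMeasurable
  · refine Filter.Eventually.of_forall (fun x => ?_)
    have hb := pow_mul_exp_le h2 n x
    have hn : ‖|x| ^ n * Real.exp (-(c * x ^ 2))‖ = |x| ^ n * Real.exp (-(c * x ^ 2)) := by
      rw [Real.norm_eq_abs, abs_of_nonneg (by positivity)]
    rw [hn]
    have hsplit : Real.exp (-(c * x ^ 2))
        = Real.exp (-(c / 2 * x ^ 2)) * Real.exp (-(c / 2 * x ^ 2)) := by
      rw [← Real.exp_add]; ring_nf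
    calc |x| ^ n * Real.exp (-(c * x ^ 2))
        = (|x| ^ n * Real.exp (-(c / 2 * x ^ 2))) * Real.exp (-(c / 2 * x ^ 2)) := by
          rw [hsplit]; ring
      _ ≤ (1 + n.factorial / (c / 2) ^ n) * Real.exp (-(c / 2 * x ^ 2)) :=
          mul_le_mul_of_nonneg_right hb (Real.exp_pos _).le
      _ = (1 + n.factorial / (c / 2) ^ n) * Real.exp (-(c / 2) * x ^ 2) := by rw [neg_mul]

lemma integrable_pow_gauss {c : ℝ} (hc : 0 < c) (n : ℕ) :
    Integrable fun x : ℝ => x ^ n * Real.exp (-(c * x ^ 2)) := by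
  apply (integrable_abs_pow_gauss hc n).mono'
  · exact ((continuous_pow n).mul (Real.continuous_exp.comp (by continuity))).aestronglyMeasurable
  · refine Filter.Eventually.of_forall (fun x => ?_)
    rw [norm_mul, norm_pow, Real.norm_eq_abs, Real.norm_eq_abs,
      abs_of_pos (Real.exp_pos _)]

noncomputable def NN (n : ℕ) : ℝ := ∫ x : ℝ, x ^ n * Real.exp (-(2 * x ^ 2))

noncomputable def cst (j : ℕ) : ℝ := NN (j + 1) / NN 0

lemma NN_zero_pos : 0 < NN 0 := by
  have : NN 0 = Real.sqrt (Real.pi / 2) := by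
    rw [NN]
    rw [show (fun x : ℝ => x ^ 0 * Real.exp (-(2 * x ^ 2)))
        = fun x : ℝ => Real.exp (-2 * x ^ 2) by funext x; rw [pow_zero, one_mul, neg_mul]]
    exact integral_gaussian 2
  rw [this]
  exact Real.sqrt_pos.mpr (by positivity)

lemma cst_eq (j : ℕ) : NN (j + 1) - cst j * NN 0 = 0 := by
  rw [cst, div_mul_cancel₀ _ (ne_of_gt NN_zero_pos)]
  ring

noncomputable def gker (a b : ℕ) (x : ℝ) : ℝ :=
  (x ^ (a + 1) - cst a) * (x ^ (b + 1) - cst b) * Real.exp (-(2 * x ^ 2))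

lemma gker_expand (a b : ℕ) : (fun x => gker a b x) = fun x =>
    (x ^ (a + b + 2) * Real.exp (-(2 * x ^ 2))
      - cst b * (x ^ (a + 1) * Real.exp (-(2 * x ^ 2))))
      - cst a * (x ^ (b + 1) * Real.exp (-(2 * x ^ 2)))
      + cst a * cst b * (x ^ 0 * Real.exp (-(2 * x ^ 2))) := by
  funext x
  rw [gker]
  rw [show a + b + 2 = (a + 1) + (b + 1) by ring, pow_add, pow_zero]
  ring

lemma integrable_gker (a b : ℕ) : Integrable (gker a b) := by
  rw [show gker a b = fun x => gker a b x from rfl, gker_expand]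
  exact (((integrable_pow_gauss two_pos _).sub
    ((integrable_pow_gauss two_pos _).const_mul _)).sub
    ((integrable_pow_gauss two_pos _).const_mul _)).add
    ((integrable_pow_gauss two_pos _).const_mul _)

lemma integral_gker (a b : ℕ) :
    ∫ x, gker a b x = NN (a + b + 2) - cst b * NN (a + 1) := by
  rw [gker_expand]
  rw [integral_add, integral_sub, integral_sub, integral_const_mul, integral_const_mul,
    integral_const_mul]
  · have h1 := cst_eq b
    have : (∫ x, x ^ (b+1) * Real.exp (-(2*x^2))) = NN (b+1) := rfl
    rw [this]
    have h0 : (∫ x, x ^ 0 * Real.exp (-(2*x^2))) = NN 0 := rfl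
    rw [h0]
    show NN (a+b+2) - cst b * NN (a+1) - cst a * NN (b+1) + cst a * cst b * NN 0
        = NN (a+b+2) - cst b * NN (a+1)
    linear_combination (-(cst a)) * h1
  · exact integrable_pow_gauss two_pos _
  · exact (integrable_pow_gauss two_pos _).const_mul _
  · exact (integrable_pow_gauss two_pos _).sub ((integrable_pow_gauss two_pos _).const_mul _)
  · exact (integrable_pow_gauss two_pos _).const_mul _
  · exact ((integrable_pow_gauss two_pos _).sub
      ((integrable_pow_gauss two_pos _).const_mul _)).sub
      ((integrable_pow_gauss two_pos _).const_mul _)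
  · exact (integrable_pow_gauss two_pos _).const_mul _

lemma inj_core (m : ℕ) (ε : Fin m → ℝ)
    (H : ∀ i : Fin m, ∑ j, ε j * (NN ((i : ℕ) + (j : ℕ) + 2) - cst j * NN ((i : ℕ) + 1)) = 0) :
    ε = 0 := by
  set Q : ℝ → ℝ := fun x => ∑ j : Fin m, ε j * (x ^ ((j : ℕ) + 1) - cst j) with hQ
  set F : ℝ → ℝ := fun x => (Q x * Real.exp (-(x ^ 2))) ^ 2 with hF
  have hFrep : F = fun x => ∑ j : Fin m, ε j *
      ∑ j' : Fin m, ε j' * gker (j : ℕ) (j' : ℕ) x := by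
    funext x
    have hE2 : Real.exp (-(2 * x ^ 2)) = Real.exp (-(x ^ 2)) ^ 2 := by
      rw [pow_two (Real.exp (-(x ^ 2))), ← Real.exp_add]; congr 1; ring
    simp only [hF, hQ, gker, hE2, Finset.sum_mul, Finset.mul_sum]
    rw [pow_two, Finset.sum_mul_sum]
    apply Finset.sum_congr rfl
    intro j _
    apply Finset.sum_congr rfl
    intro j' _
    ring
  have hIntF : Integrable F := by
    rw [hFrep]
    exact integrable_finset_sum _ fun j _ =>
      (integrable_finset_sum _ fun j' _ => (integrable_gker _ _).const_mul _).const_mul _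
  have hintF : ∫ x, F x = 0 := by
    rw [hFrep, integral_finset_sum _ fun j _ =>
      (integrable_finset_sum _ fun j' _ => (integrable_gker _ _).const_mul _).const_mul _]
    rw [Finset.sum_eq_zero]
    intro j _
    rw [integral_const_mul, integral_finset_sum _ fun j' _ => (integrable_gker _ _).const_mul _]
    have : ∑ j' : Fin m, ∫ x, ε j' * gker (j : ℕ) (j' : ℕ) x
        = ∑ j' : Fin m, ε j' * (NN ((j : ℕ) + (j' : ℕ) + 2) - cst j' * NN ((j : ℕ) + 1)) := by
      apply Finset.sum_congr rfl
      intro j' _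
      rw [integral_const_mul, integral_gker]
    rw [this, H j, mul_zero]
  have hQcont : Continuous Q := by
    apply continuous_finset_sum
    intro j _
    exact continuous_const.mul ((continuous_pow _).sub continuous_const)
  have hFcont : Continuous F := by
    apply Continuous.pow
    exact hQcont.mul (Real.continuous_exp.comp (by continuity))
  have hFzero : F = 0 := by
    have hae : F =ᵐ[volume] 0 :=
      (integral_eq_zero_iff_of_nonneg (fun x => sq_nonneg _) hIntF).mp hintF
    exact (Continuous.ae_eq_iff_eq volume hFcont continuous_const).mp hae
  have hQzero : ∀ x, Q x = 0 := by
    intro x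
    have : F x = 0 := by rw [hFzero]; rfl
    rw [hF] at this
    have h2 : Q x * Real.exp (-(x ^ 2)) = 0 := by
      exact pow_eq_zero_iff (by norm_num) |>.mp this
    rcases mul_eq_zero.mp h2 with h | h
    · exact h
    · exact absurd h (Real.exp_ne_zero _)
  -- polynomial step
  set P : Polynomial ℝ := ∑ j : Fin m, Polynomial.C (ε j) *
    (Polynomial.X ^ ((j : ℕ) + 1) - Polynomial.C (cst j)) with hP
  have hPeval : ∀ x, P.eval x = Q x := by
    intro x
    rw [hP, Polynomial.eval_finset_sum]
    simp [hQ]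
  have hPzero : P = 0 := Polynomial.funext fun r => by
    rw [hPeval r, hQzero r, Polynomial.eval_zero]
  funext j0
  have hcoeff : P.coeff ((j0 : ℕ) + 1) = ε j0 := by
    rw [hP, Polynomial.finset_sum_coeff]
    rw [Finset.sum_eq_single j0]
    · have h0 : ¬((j0 : ℕ) + 1 = 0) := Nat.succ_ne_zero _
      rw [Polynomial.coeff_C_mul, Polynomial.coeff_sub, Polynomial.coeff_X_pow,
        Polynomial.coeff_C, if_pos rfl, if_neg h0]
      ring
    · intro j _ hj
      have hne : (j0 : ℕ) + 1 ≠ (j : ℕ) + 1 := by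
        simp only [ne_eq, add_left_inj]
        exact fun hc => hj (Fin.ext hc.symm)
      have h0 : ¬((j0 : ℕ) + 1 = 0) := Nat.succ_ne_zero _
      rw [Polynomial.coeff_C_mul, Polynomial.coeff_sub, Polynomial.coeff_X_pow,
        Polynomial.coeff_C, if_neg hne, if_neg h0]
      ring
    · intro hj0
      exact absurd (Finset.mem_univ j0) hj0
  have h2 : P.coeff ((j0 : ℕ) + 1) = 0 := by rw [hPzero, Polynomial.coeff_zero]
  have : ε j0 = 0 := by rw [← hcoeff, h2]
  simpa using this

noncomputable def Kj (j : ℕ) : ℝ := 1 + (j + 1).factorial + |cst j|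

noncomputable def hterm (j : ℕ) (x : ℝ) : ℝ := (x ^ (j + 1) - cst j) * Real.exp (-(2 * x ^ 2))

lemma hterm_bound (j : ℕ) (x : ℝ) : |hterm j x| ≤ Kj j * Real.exp (-(x ^ 2)) := by
  have hE : (0:ℝ) < Real.exp (-(x ^ 2)) := Real.exp_pos _
  have hE1 : Real.exp (-(x ^ 2)) ≤ 1 := Real.exp_le_one_iff.mpr (by nlinarith [sq_nonneg x])
  have h2 : Real.exp (-(2 * x ^ 2)) = Real.exp (-(x ^ 2)) * Real.exp (-(x ^ 2)) := by
    rw [← Real.exp_add]; congr 1; ring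
  have habs : |x ^ (j + 1) - cst j| ≤ |x| ^ (j + 1) + |cst j| := by
    calc |x ^ (j + 1) - cst j| ≤ |x ^ (j + 1)| + |cst j| := abs_sub _ _
      _ = |x| ^ (j + 1) + |cst j| := by rw [abs_pow]
  have hb : |x| ^ (j + 1) * Real.exp (-(x ^ 2)) ≤ 1 + (j + 1).factorial := by
    have := pow_mul_exp_le one_pos (j + 1) x
    simpa using this
  have hd : |x ^ (j + 1) - cst j| * Real.exp (-(x ^ 2)) ≤ Kj j := by
    calc |x ^ (j + 1) - cst j| * Real.exp (-(x ^ 2))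
        ≤ (|x| ^ (j + 1) + |cst j|) * Real.exp (-(x ^ 2)) :=
          mul_le_mul_of_nonneg_right habs hE.le
      _ = |x| ^ (j + 1) * Real.exp (-(x ^ 2)) + |cst j| * Real.exp (-(x ^ 2)) := by ring
      _ ≤ (1 + (j + 1).factorial) + |cst j| * 1 :=
          add_le_add hb (mul_le_mul_of_nonneg_left hE1 (abs_nonneg _))
      _ = Kj j := by rw [Kj]; ring
  calc |hterm j x| = |x ^ (j + 1) - cst j| * Real.exp (-(2 * x ^ 2)) := by
        rw [hterm, abs_mul, Real.abs_exp]
    _ = (|x ^ (j + 1) - cst j| * Real.exp (-(x ^ 2))) * Real.exp (-(x ^ 2)) := by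
        rw [h2]; ring
    _ ≤ Kj j * Real.exp (-(x ^ 2)) := mul_le_mul_of_nonneg_right hd hE.le

lemma pow_hterm_expand (k j : ℕ) : (fun x : ℝ => x ^ k * hterm j x)
    = fun x => x ^ (k + j + 1) * Real.exp (-(2 * x ^ 2))
      - cst j * (x ^ k * Real.exp (-(2 * x ^ 2))) := by
  funext x
  rw [hterm, show k + j + 1 = k + (j + 1) by ring, pow_add]
  ring

lemma integrable_pow_hterm (k j : ℕ) : Integrable fun x : ℝ => x ^ k * hterm j x := by
  rw [pow_hterm_expand]
  exact (integrable_pow_gauss two_pos _).sub ((integrable_pow_gauss two_pos _).const_mul _)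

lemma integral_pow_hterm (k j : ℕ) :
    ∫ x, x ^ k * hterm j x = NN (k + j + 1) - cst j * NN k := by
  rw [pow_hterm_expand, integral_sub (integrable_pow_gauss two_pos _)
    ((integrable_pow_gauss two_pos _).const_mul _), integral_const_mul]
  rfl

noncomputable def baseg (x : ℝ) : ℝ := (Real.sqrt Real.pi)⁻¹ * Real.exp (-(x ^ 2))

lemma integrable_pow_baseg (k : ℕ) : Integrable fun x : ℝ => x ^ k * baseg x := by
  have h := (integrable_pow_gauss one_pos k).const_mul (Real.sqrt Real.pi)⁻¹
  have e : (fun x : ℝ => (Real.sqrt Real.pi)⁻¹ * (x ^ k * Real.exp (-(1 * x ^ 2))))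
      = fun x : ℝ => x ^ k * baseg x := by
    funext x; rw [baseg, one_mul]; ring
  rw [← e]
  exact h

noncomputable def Gm (k : ℕ) : ℝ := ∫ x : ℝ, x ^ k * baseg x

lemma sqrt_pi_pos : 0 < Real.sqrt Real.pi := Real.sqrt_pos.mpr Real.pi_pos

lemma Gm_zero : Gm 0 = 1 := by
  rw [Gm]
  have e : (fun x : ℝ => x ^ 0 * baseg x)
      = fun x : ℝ => (Real.sqrt Real.pi)⁻¹ * Real.exp (-1 * x ^ 2) := by
    funext x; rw [baseg, pow_zero, one_mul, neg_mul, one_mul]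
  rw [e, integral_const_mul, integral_gaussian]
  rw [show Real.pi / 1 = Real.pi by ring]
  exact inv_mul_cancel₀ (ne_of_gt sqrt_pi_pos)

noncomputable def fd (m : ℕ) (ε : Fin m → ℝ) (x : ℝ) : ℝ :=
  baseg x + ∑ j : Fin m, ε j * hterm (j : ℕ) x

noncomputable def Km (m : ℕ) : ℝ := ∑ j : Fin m, Kj (j : ℕ)

noncomputable def dlt (m : ℕ) : ℝ := (Real.sqrt Real.pi)⁻¹ / (Km m + 1)

lemma Kj_nonneg (j : ℕ) : 0 ≤ Kj j := by
  rw [Kj]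
  positivity

lemma Km_nonneg (m : ℕ) : 0 ≤ Km m := Finset.sum_nonneg fun j _ => Kj_nonneg _

lemma dlt_pos (m : ℕ) : 0 < dlt m := by
  rw [dlt]
  have := Km_nonneg m
  positivity

lemma sum_bound {m : ℕ} {ε : Fin m → ℝ} (hε : ∀ j : Fin m, |ε j| ≤ dlt m) (x : ℝ) :
    |∑ j : Fin m, ε j * hterm (j : ℕ) x| ≤ (Real.sqrt Real.pi)⁻¹ * Real.exp (-(x ^ 2)) := by
  have hE : (0:ℝ) < Real.exp (-(x ^ 2)) := Real.exp_pos _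
  calc |∑ j : Fin m, ε j * hterm (j : ℕ) x|
      ≤ ∑ j : Fin m, |ε j * hterm (j : ℕ) x| := Finset.abs_sum_le_sum_abs _ _
    _ ≤ ∑ j : Fin m, dlt m * (Kj (j : ℕ) * Real.exp (-(x ^ 2))) := by
        apply Finset.sum_le_sum
        intro j _
        rw [abs_mul]
        exact mul_le_mul (hε j) (hterm_bound _ x) (abs_nonneg _) (dlt_pos m).le
    _ = dlt m * Km m * Real.exp (-(x ^ 2)) := by
        rw [← Finset.mul_sum, ← Finset.sum_mul, Km]
        ring
    _ ≤ (Real.sqrt Real.pi)⁻¹ * Real.exp (-(x ^ 2)) := by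
        apply mul_le_mul_of_nonneg_right _ hE.le
        have hK : Km m + 1 ≠ 0 := by have := Km_nonneg m; positivity
        have h1 : dlt m * (Km m + 1) = (Real.sqrt Real.pi)⁻¹ := by
          rw [dlt]
          exact div_mul_cancel₀ _ hK
        nlinarith [dlt_pos m]

lemma fd_nonneg {m : ℕ} {ε : Fin m → ℝ} (hε : ∀ j : Fin m, |ε j| ≤ dlt m) (x : ℝ) :
    0 ≤ fd m ε x := by
  have h1 := sum_bound hε x
  have h2 := neg_abs_le (∑ j : Fin m, ε j * hterm (j : ℕ) x)
  rw [fd, baseg]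
  linarith

lemma fd_upper {m : ℕ} {ε : Fin m → ℝ} (hε : ∀ j : Fin m, |ε j| ≤ dlt m) (x : ℝ) :
    fd m ε x ≤ 2 * (Real.sqrt Real.pi)⁻¹ * Real.exp (-(x ^ 2)) := by
  have h1 := sum_bound hε x
  have h2 := le_abs_self (∑ j : Fin m, ε j * hterm (j : ℕ) x)
  rw [fd, baseg]
  linarith

lemma fd_cont (m : ℕ) (ε : Fin m → ℝ) : Continuous (fd m ε) := by
  apply Continuous.add
  · exact continuous_const.mul (Real.continuous_exp.comp (by continuity))
  · apply continuous_finset_sum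
    intro j _
    exact continuous_const.mul (((continuous_pow _).sub continuous_const).mul
      (Real.continuous_exp.comp (by continuity)))

lemma fd_pow_expand (m : ℕ) (ε : Fin m → ℝ) (k : ℕ) :
    (fun x => fd m ε x * x ^ k) = fun x => x ^ k * baseg x
      + ∑ j : Fin m, ε j * (x ^ k * hterm (j : ℕ) x) := by
  funext x
  rw [fd, add_mul, Finset.sum_mul]
  congr 1
  · ring
  · exact Finset.sum_congr rfl fun j _ => by ring

lemma integrable_fd_pow (m : ℕ) (ε : Fin m → ℝ) (k : ℕ) :
    Integrable fun x => fd m ε x * x ^ k := by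
  rw [fd_pow_expand]
  exact (integrable_pow_baseg k).add (integrable_finset_sum _ fun j _ =>
    (integrable_pow_hterm k _).const_mul _)

lemma integral_fd_pow (m : ℕ) (ε : Fin m → ℝ) (k : ℕ) :
    ∫ x, fd m ε x * x ^ k
      = Gm k + ∑ j : Fin m, ε j * (NN (k + (j : ℕ) + 1) - cst (j : ℕ) * NN k) := by
  rw [fd_pow_expand, integral_add (integrable_pow_baseg k)
    (integrable_finset_sum _ fun j _ => (integrable_pow_hterm k _).const_mul _),
    integral_finset_sum _ fun j _ => (integrable_pow_hterm k _).const_mul _]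
  congr 1
  exact Finset.sum_congr rfl fun j _ => by rw [integral_const_mul, integral_pow_hterm]

lemma integrable_fd (m : ℕ) (ε : Fin m → ℝ) : Integrable (fd m ε) := by
  have := integrable_fd_pow m ε 0
  simpa using this

lemma integral_fd (m : ℕ) (ε : Fin m → ℝ) : ∫ x, fd m ε x = 1 := by
  have h := integral_fd_pow m ε 0
  simp only [pow_zero, mul_one] at h
  rw [h, Gm_zero]
  rw [Finset.sum_eq_zero, add_zero]
  intro j _
  rw [show 0 + (j : ℕ) + 1 = (j : ℕ) + 1 by ring, cst_eq, mul_zero]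

noncomputable def muF (m : ℕ) (ε : Fin m → ℝ) : Measure ℝ :=
  MeasureTheory.volume.withDensity fun x => ENNReal.ofReal (fd m ε x)

lemma muF_density_eq (m : ℕ) (ε : Fin m → ℝ) :
    (fun x => ENNReal.ofReal (fd m ε x))
      = fun x => ((Real.toNNReal (fd m ε x) : NNReal) : ENNReal) := rfl

lemma fd_toNNReal_measurable (m : ℕ) (ε : Fin m → ℝ) :
    Measurable fun x => Real.toNNReal (fd m ε x) :=
  (fd_cont m ε).measurable.real_toNNReal

lemma muF_prob {m : ℕ} {ε : Fin m → ℝ} (hε : ∀ j : Fin m, |ε j| ≤ dlt m) :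
    IsProbabilityMeasure (muF m ε) := by
  constructor
  rw [muF, withDensity_apply _ MeasurableSet.univ, setLIntegral_univ,
    ← ofReal_integral_eq_lintegral_ofReal (integrable_fd m ε)
      (Filter.Eventually.of_forall (fd_nonneg hε)), integral_fd, ENNReal.ofReal_one]

lemma muF_ac (m : ℕ) (ε : Fin m → ℝ) : muF m ε ≪ MeasureTheory.volume :=
  withDensity_absolutelyContinuous _ _

lemma muF_integrable_abs_pow {m : ℕ} {ε : Fin m → ℝ} (hε : ∀ j : Fin m, |ε j| ≤ dlt m) :
    Integrable (fun x => |x| ^ m) (muF m ε) := by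
  rw [muF, muF_density_eq, integrable_withDensity_iff_integrable_coe_smul
    (fd_toNNReal_measurable m ε)]
  have he : (fun x => ((Real.toNNReal (fd m ε x) : ℝ)) • |x| ^ m)
      = fun x => fd m ε x * |x| ^ m := by
    funext x
    rw [smul_eq_mul, Real.coe_toNNReal _ (fd_nonneg hε x)]
  rw [he]
  apply Integrable.mono' ((integrable_abs_pow_gauss one_pos m).const_mul
    (2 * (Real.sqrt Real.pi)⁻¹))
  · exact ((fd_cont m ε).mul (continuous_abs.pow m)).aestronglyMeasurable
  · refine Filter.Eventually.of_forall fun x => ?_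
    have h1 : ‖fd m ε x * |x| ^ m‖ = fd m ε x * |x| ^ m := by
      rw [Real.norm_eq_abs, abs_of_nonneg (mul_nonneg (fd_nonneg hε x) (by positivity))]
    rw [h1]
    calc fd m ε x * |x| ^ m
        ≤ (2 * (Real.sqrt Real.pi)⁻¹ * Real.exp (-(x ^ 2))) * |x| ^ m :=
          mul_le_mul_of_nonneg_right (fd_upper hε x) (by positivity)
      _ = 2 * (Real.sqrt Real.pi)⁻¹ * (|x| ^ m * Real.exp (-(1 * x ^ 2))) := by
          rw [show -(1 * x ^ 2) = -(x ^ 2) by ring]; ring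

lemma muF_moment {m : ℕ} {ε : Fin m → ℝ} (hε : ∀ j : Fin m, |ε j| ≤ dlt m) (k : ℕ) :
    ∫ x, x ^ k ∂(muF m ε)
      = Gm k + ∑ j : Fin m, ε j * (NN (k + (j : ℕ) + 1) - cst (j : ℕ) * NN k) := by
  rw [muF, muF_density_eq, integral_withDensity_eq_integral_smul
    (fd_toNNReal_measurable m ε)]
  have he : (fun x : ℝ => (Real.toNNReal (fd m ε x)) • x ^ k)
      = fun x => fd m ε x * x ^ k := by
    funext x
    rw [NNReal.smul_def, smul_eq_mul, Real.coe_toNNReal _ (fd_nonneg hε x)]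
  rw [he, integral_fd_pow]

/-- If a real polynomial `p` in `m` variables vanishes at the vector of the
first `m` moments `(E[X], …, E[X^m])` of every continuous real random variable `X` with
`E[|X|^m] < ∞`, then `p = 0`. (Random variables are identified with their laws: probability
measures on `ℝ` absolutely continuous w.r.t. Lebesgue measure.) -/
theorem mvPolynomial_zero_of_vanishing_on_moments
    (m : ℕ) (hm : 1 ≤ m) (p : MvPolynomial (Fin m) ℝ)
    (h : ∀ μ : Measure ℝ, IsProbabilityMeasure μ → μ ≪ MeasureTheory.volume →
      Integrable (fun x => |x| ^ m) μ →
      MvPolynomial.eval (fun i : Fin m => ∫ x, x ^ ((i : ℕ) + 1) ∂μ) p = 0) :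
    p = 0 := by
  classical
  -- the affine moment map
  set A : Fin m → Fin m → ℝ := fun i j =>
    NN ((i : ℕ) + (j : ℕ) + 2) - cst (j : ℕ) * NN ((i : ℕ) + 1) with hA
  set Gvec : Fin m → ℝ := fun i => Gm ((i : ℕ) + 1) with hGvec
  set T : (Fin m → ℝ) →ₗ[ℝ] (Fin m → ℝ) :=
    { toFun := fun ε => fun i => ∑ j, ε j * A i j,
      map_add' := fun u v => by
        funext i
        simp only [Pi.add_apply]
        rw [← Finset.sum_add_distrib]
        exact Finset.sum_congr rfl fun j _ => by ring,
      map_smul' := fun c u => by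
        funext i
        simp only [Pi.smul_apply, smul_eq_mul, RingHom.id_apply]
        rw [Finset.mul_sum]
        exact Finset.sum_congr rfl fun j _ => by ring } with hT
  have hTapp : ∀ ε i, T ε i = ∑ j, ε j * A i j := fun ε i => rfl
  have hinj : Function.Injective T := by
    rw [injective_iff_map_eq_zero]
    intro u hu
    apply inj_core m u
    intro i
    have := congrFun hu i
    rw [hTapp] at this
    exact this
  set E : (Fin m → ℝ) ≃ₗ[ℝ] (Fin m → ℝ) :=
    LinearEquiv.ofBijective T ⟨hinj, LinearMap.injective_iff_surjective.mp hinj⟩ with hE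
  have hEapp : ∀ ε, E ε = T ε := fun ε => rfl
  set Ecl := E.toContinuousLinearEquiv with hEcl
  set U : Set (Fin m → ℝ) := (fun ε => Gvec + T ε) '' Metric.ball 0 (dlt m) with hU
  have hUopen : IsOpen U := by
    have hcomp : (fun ε => Gvec + T ε)
        = (fun v => Gvec + v) ∘ (Ecl : (Fin m → ℝ) → (Fin m → ℝ)) := by
      funext ε
      simp only [Function.comp_apply]
      rw [LinearEquiv.coe_toContinuousLinearEquiv', hEapp]
    rw [hU, hcomp, Set.image_comp]
    exact (Homeomorph.addLeft Gvec).isOpenMap _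
      (Ecl.toHomeomorph.isOpenMap _ Metric.isOpen_ball)
  have hUne : U.Nonempty := ⟨Gvec + T 0, ⟨0, Metric.mem_ball_self (dlt_pos m), rfl⟩⟩
  have hvanish : ∀ v ∈ U, MvPolynomial.eval v p = 0 := by
    rintro v ⟨ε, hball, rfl⟩
    have hε : ∀ j : Fin m, |ε j| ≤ dlt m := by
      intro j
      have h1 : dist (ε j) ((0 : Fin m → ℝ) j) ≤ dist ε 0 := dist_le_pi_dist ε 0 j
      have h2 : dist ε 0 < dlt m := Metric.mem_ball.mp hball
      have h3 : dist (ε j) ((0 : Fin m → ℝ) j) = |ε j| := by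
        simp [Real.dist_eq]
      linarith [h3 ▸ h1]
    have hmom : (fun i : Fin m => ∫ x, x ^ ((i : ℕ) + 1) ∂(muF m ε)) = Gvec + T ε := by
      funext i
      rw [muF_moment hε ((i : ℕ) + 1)]
      rw [Pi.add_apply, hGvec, hTapp]
      congr 1
      apply Finset.sum_congr rfl
      intro j _
      rw [hA, show (i : ℕ) + 1 + (j : ℕ) + 1 = (i : ℕ) + (j : ℕ) + 2 from by omega]
    have := h (muF m ε) (muF_prob hε) (muF_ac m ε) (muF_integrable_abs_pow hε)
    rw [hmom] at this
    exact this
  exact mv_zero_of_open p U hUopen hUne hvanish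
end
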